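/- Let D and T be noncommuting formal variables with deg D = 1 and deg T = 2, so that the sum of all words of total degree 3 in D and T is D³ + DT + TD. Suppose T restricted to degree-j objects acts as (β - j)(j+1) times multiplication by a fixed tensor r (so with coefficient β on degree-0 objects and 2(β-1) on degree-1 objects), and D is a derivation with D(r·x) = (∂r)·x + r·Dx. Then, writing T₀ f = r·f and T₁(Df) = r·Df, one has π_3(Σ_{j=0}^{3}(D+T)^j) f = D³f + β·D(T₀ f) + 2(β-1)·T₁(Df) = D³f + (3β-2)·(r∨)·Df + β·((Dr)∨)f for functions f, where r∨ denotes symmetric multiplication by r. -/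
import Mathlib

/-- Third-order expansion.  Let `W j` be the space of symmetric `j`-cotensors with values in
`λ`-densities, `D j : W j → W (j+1)` the symmetrized covariant derivative (degree 1),
`R j : W j → W (j+2)` the symmetric product with a fixed symmetric 2-tensor `r`,
`R' j : W j → W (j+3)` the symmetric product with `∇_s r = Dr`, with the Leibniz rule
`D(r ∨ x) = (Dr) ∨ x + r ∨ Dx`, and let `T j = (β - j)(j+1)·R j`.
The sum of all words of total degree 3 in `D, T` applied to `f` of degree 0, namely
`D³f + D(T f) + T(D f)`, equals `D³f + (3β-2)·r∨(Df) + β·(Dr)∨f`. -/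
theorem stmt6 (β : ℝ) (W : ℕ → Type*) [∀ j, AddCommGroup (W j)] [∀ j, Module ℝ (W j)]
    (D : ∀ j, W j →ₗ[ℝ] W (j + 1))
    (R : ∀ j, W j →ₗ[ℝ] W (j + 2))
    (R' : ∀ j, W j →ₗ[ℝ] W (j + 3))
    (leib : ∀ j (x : W j), D (j + 2) (R j x) = R' j x + R (j + 1) (D j x))
    (T : ∀ j, W j →ₗ[ℝ] W (j + 2))
    (hT : ∀ j, T j = ((β - (j : ℝ)) * ((j : ℝ) + 1)) • R j)
    (f : W 0) :
    D 2 (D 1 (D 0 f)) + D 2 (T 0 f) + T 1 (D 0 f)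
      = D 2 (D 1 (D 0 f)) + (3 * β - 2) • R 1 (D 0 f) + β • R' 0 f := by
  have h0 := hT 0
  have h1 := hT 1
  simp only [h0, h1, LinearMap.smul_apply] at *
  rw [map_smul, leib 0 f]
  push_cast
  module
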